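/- arXiv:2210.07727 — 3 statements merged into one kernel-verified Lean document; each statement's English description precedes it below -/
import Mathlib

section
/- For every integer m ≥ 1 and all real numbers t_1, …, t_m, setting t = t_1 + … + t_m, one has 1 − cos(t) ≤ m · ∑_{i=1}^m (1 − cos(t_i)). -/
open Real Finset

lemma abs_sin_sum_le {m : ℕ} (t : Fin m → ℝ) :
    |Real.sin (∑ i, t i)| ≤ ∑ i, |Real.sin (t i)| := by
  induction m with
  | zero => simp
  | succ n ih =>
    rw [Fin.sum_univ_succ, Fin.sum_univ_succ, Real.sin_add]
    calc |Real.sin (t 0) * Real.cos (∑ i : Fin n, t i.succ)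
            + Real.cos (t 0) * Real.sin (∑ i : Fin n, t i.succ)|
        ≤ |Real.sin (t 0) * Real.cos (∑ i : Fin n, t i.succ)|
            + |Real.cos (t 0) * Real.sin (∑ i : Fin n, t i.succ)| := abs_add_le _ _
      _ ≤ |Real.sin (t 0)| * 1 + 1 * |Real.sin (∑ i : Fin n, t i.succ)| := by
          rw [abs_mul, abs_mul]
          gcongr
          · exact Real.abs_cos_le_one _
          · exact Real.abs_cos_le_one _
      _ ≤ |Real.sin (t 0)| + ∑ i : Fin n, |Real.sin (t i.succ)| := by
          rw [mul_one, one_mul]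
          gcongr
          exact ih fun i => t i.succ

/-- Cosine-splitting inequality: for `m ≥ 1` and reals `t 1, …, t m`,
`1 - cos (∑ i, t i) ≤ m * ∑ i, (1 - cos (t i))`. -/
theorem cosine_splitting (m : ℕ) (hm : 1 ≤ m) (t : Fin m → ℝ) :
    1 - Real.cos (∑ i, t i) ≤ (m : ℝ) * ∑ i, (1 - Real.cos (t i)) := by
  have key : ∀ x : ℝ, 1 - Real.cos x = 2 * Real.sin (x / 2) ^ 2 := by
    intro x
    have h1 : Real.cos x = 2 * Real.cos (x / 2) ^ 2 - 1 := by
      rw [← Real.cos_two_mul]; ring_nf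
    have h2 := Real.sin_sq_add_cos_sq (x / 2)
    nlinarith
  rw [key]
  have hsum : (∑ i, t i) / 2 = ∑ i, t i / 2 := by
    rw [Finset.sum_div]
  rw [hsum]
  have h1 : |Real.sin (∑ i, t i / 2)| ≤ ∑ i, |Real.sin (t i / 2)| :=
    abs_sin_sum_le fun i => t i / 2
  have h2 : (∑ i, |Real.sin (t i / 2)|) ^ 2
      ≤ (m : ℝ) * ∑ i, |Real.sin (t i / 2)| ^ 2 := by
    have := sq_sum_le_card_mul_sum_sq (s := (Finset.univ : Finset (Fin m)))
      (f := fun i => |Real.sin (t i / 2)|)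
    simpa using this
  have h3 : Real.sin (∑ i, t i / 2) ^ 2 ≤ (∑ i, |Real.sin (t i / 2)|) ^ 2 := by
    rw [← sq_abs]
    exact pow_le_pow_left₀ (abs_nonneg _) h1 2
  calc 2 * Real.sin (∑ i, t i / 2) ^ 2
      ≤ 2 * ((m : ℝ) * ∑ i, |Real.sin (t i / 2)| ^ 2) := by
        nlinarith
    _ = (m : ℝ) * ∑ i, (1 - Real.cos (t i)) := by
        rw [Finset.mul_sum, Finset.mul_sum, Finset.mul_sum]
        congr 1
        ext i
        rw [sq_abs, key (t i)]
        ring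
end

section
/- Let (E, Σ, P) be a probability space whose σ-algebra is countably generated, and let h : E × E → ℝ be a bounded measurable function. Then for every v in the essential range of h with respect to P ⊗ P and every ε > 0, there exist measurable sets E₁, E₂ ⊆ E with P(E₁) > 0 and P(E₂) > 0 such that | v − (1/(P(E₁)·P(E₂))) ∫_{E₁ × E₂} h d(P⊗P) | ≤ ε; equivalently, writing g_i = (1/P(E_i))·1_{E_i} ∈ L²(E, P), the pairing ⟨g₁, H g₂⟩ of the integral operator H with kernel h is within ε of v. -/
/-!
The set `S = {p | |h p.1 p.2 - v| < ε / 2}` has positive `P ⊗ P`-measure. Measurable rectangles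
form a semiring generating the product σ-algebra, so `S` is approximated in measure by a finite
disjoint union of rectangles; as little of that union lies outside `S`, one of its rectangles `R`
has only a small fraction `μ(R \ S) / μ(R)` of its mass outside `S`. The average of `h` over `R`
then differs from `v` by at most `ε / 2` (from `R ∩ S`) plus `sup |h - v|` times that fraction.
-/

open MeasureTheory Set
open scoped symmDiff

namespace MeasureTheory

section Rectangles

variable {α β : Type*}

lemma isSetRing_measurableSet [MeasurableSpace α] : IsSetRing {s : Set α | MeasurableSet s} :=
  ⟨.empty, fun _ _ => .union, fun _ _ => .diff⟩

lemma IsSetRing.isSetSemiring_image2_prod {C : Set (Set α)} {D : Set (Set β)}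
    (hC : IsSetRing C) (hD : IsSetRing D) : IsSetSemiring (image2 (· ×ˢ ·) C D) where
  empty_mem := ⟨∅, hC.empty_mem, ∅, hD.empty_mem, empty_prod⟩
  inter_mem := by
    rintro _ ⟨s₁, hs₁, t₁, ht₁, rfl⟩ _ ⟨s₂, hs₂, t₂, ht₂, rfl⟩
    exact ⟨s₁ ∩ s₂, hC.inter_mem hs₁ hs₂, t₁ ∩ t₂, hD.inter_mem ht₁ ht₂, prod_inter_prod.symm⟩
  sdiff_eq_sUnion' := by
    classical
    rintro _ ⟨s₁, hs₁, t₁, ht₁, rfl⟩ _ ⟨s₂, hs₂, t₂, ht₂, rfl⟩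
    refine ⟨{(s₁ \ s₂) ×ˢ t₁, (s₁ ∩ s₂) ×ˢ (t₁ \ t₂)}, ?_, ?_, ?_⟩
    · simp only [Finset.coe_insert, Finset.coe_singleton, insert_subset_iff,
        singleton_subset_iff]
      exact ⟨mem_image2_of_mem (hC.sdiff_mem hs₁ hs₂) ht₁,
        mem_image2_of_mem (hC.inter_mem hs₁ hs₂) (hD.sdiff_mem ht₁ ht₂)⟩
    · simp only [Finset.coe_insert, Finset.coe_singleton]
      refine pairwiseDisjoint_insert.2 ⟨pairwiseDisjoint_singleton _ _, fun _ hj _ => ?_⟩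
      rw [mem_singleton_iff.1 hj]
      exact disjoint_prod.2 (.inl (disjoint_sdiff_left.mono_right inter_subset_right))
    · simp only [Finset.coe_insert, Finset.coe_singleton, sUnion_insert, sUnion_singleton]
      ext ⟨x, y⟩
      simp only [mem_sdiff, mem_prod, mem_union, mem_inter_iff]
      tauto

lemma isSetSemiring_measurableRectangles [MeasurableSpace α] [MeasurableSpace β] :
    IsSetSemiring (image2 (· ×ˢ ·) {s : Set α | MeasurableSet s} {t : Set β | MeasurableSet t}) :=
  isSetRing_measurableSet.isSetSemiring_image2_prod isSetRing_measurableSet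

end Rectangles

variable {α : Type*} [mα : MeasurableSpace α] {μ : Measure α} [IsFiniteMeasure μ]

lemma _root_.Finpartition.measureReal_eq_sum {s : Set α} (Q : Finpartition s)
    (hQ : ∀ t ∈ Q.parts, MeasurableSet t) : μ.real s = ∑ t ∈ Q.parts, μ.real t := by
  conv_lhs => rw [← Q.sup_parts, Finset.sup_id_set_eq_sUnion, sUnion_eq_biUnion]
  exact measureReal_biUnion_finset Q.disjoint hQ

theorem IsSetSemiring.exists_measureReal_sdiff_lt_mul {C : Set (Set α)} (hC : IsSetSemiring C)
    (h'C : ∃ D : Set (Set α), D.Countable ∧ D ⊆ C ∧ μ (⋃₀ D)ᶜ = 0)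
    (h : mα = MeasurableSpace.generateFrom C) {S : Set α} (hS : MeasurableSet S)
    (hμS : 0 < μ.real S) {η : ℝ} (hη : 0 < η) :
    ∃ t ∈ C, μ.real (t \ S) < η * μ.real t := by
  -- chosen so that `δ = η * (μ.real S - δ)`
  set δ := η * μ.real S / (1 + η)
  have hδ : 0 < δ := by positivity
  obtain ⟨U, hU, hUS⟩ := exists_measure_symmDiff_lt_of_generateFrom_isSetSemiring hC h'C h hS
    (ENNReal.ofReal_pos.2 hδ)
  replace hUS : μ.real (U ∆ S) < δ := ENNReal.toReal_lt_of_lt_ofReal hUS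
  obtain ⟨Q, hQC⟩ := hC.mem_supClosure_iff.1 hU
  have hQ : ∀ t ∈ Q.parts, MeasurableSet t := fun t ht =>
    h ▸ MeasurableSpace.measurableSet_generateFrom (hQC ht)
  have hUS_small : μ.real (U \ S) < η * μ.real U := by
    have hdiff : μ.real (U \ S) ≤ μ.real (U ∆ S) := measureReal_mono subset_union_left
    have hcover : μ.real S ≤ μ.real U + μ.real (U ∆ S) :=
      (measureReal_mono fun x hx => (em (x ∈ U)).imp id fun hxU => .inr ⟨hx, hxU⟩).trans
        (measureReal_union_le _ _)
    have hδ_eq : δ * (1 + η) = η * μ.real S := div_mul_cancel₀ _ (by positivity)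
    nlinarith
  have hUS_sum : μ.real (U \ S) = ∑ t ∈ Q.parts, μ.real (t \ S) := by
    simpa only [measureReal_restrict_apply' hS.compl, ← sdiff_eq]
      using Q.measureReal_eq_sum (μ := μ.restrict Sᶜ) hQ
  rw [hUS_sum, Q.measureReal_eq_sum hQ, Finset.mul_sum] at hUS_small
  obtain ⟨t, ht, hlt⟩ := Finset.exists_lt_of_sum_lt hUS_small
  exact ⟨t, hQC ht, hlt⟩

lemma abs_setAverage_sub_le {f : α → ℝ} {R S : Set α} (hS : MeasurableSet S)
    (hf : IntegrableOn f R μ) (hμR : 0 < μ.real R) {c a b : ℝ} (ha : 0 ≤ a)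
    (hfS : ∀ x ∈ R ∩ S, |f x - c| ≤ a) (hfSc : ∀ x ∈ R \ S, |f x - c| ≤ b) :
    |⨍ x in R, f x ∂μ - c| ≤ a + b * (μ.real (R \ S) / μ.real R) := by
  have hsplit : ∫ x in R, f x ∂μ - μ.real R * c =
      ∫ x in R ∩ S, (f x - c) ∂μ + ∫ x in R \ S, (f x - c) ∂μ := by
    have hfc : IntegrableOn (fun x => f x - c) R μ :=
      hf.sub (integrableOn_const (measure_ne_top _ _))
    rw [integral_inter_add_sdiff hS hfc, integral_sub hf (integrableOn_const (measure_ne_top _ _)),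
      setIntegral_const, smul_eq_mul]
  have hin : |∫ x in R ∩ S, (f x - c) ∂μ| ≤ a * μ.real (R ∩ S) := by
    simpa [mul_comm] using norm_setIntegral_le_of_norm_le_const (f := fun x => f x - c)
      (measure_lt_top _ _) hfS
  have hout : |∫ x in R \ S, (f x - c) ∂μ| ≤ b * μ.real (R \ S) := by
    simpa [mul_comm] using norm_setIntegral_le_of_norm_le_const (f := fun x => f x - c)
      (measure_lt_top _ _) hfSc
  have hRS : μ.real (R ∩ S) ≤ μ.real R := measureReal_mono inter_subset_left
  rw [setAverage_eq, smul_eq_mul]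
  calc |(μ.real R)⁻¹ * ∫ x in R, f x ∂μ - c|
      = |(μ.real R)⁻¹ * (∫ x in R, f x ∂μ - μ.real R * c)| := by
        rw [mul_sub, inv_mul_cancel_left₀ hμR.ne']
    _ = (μ.real R)⁻¹ * |∫ x in R, f x ∂μ - μ.real R * c| := by
        rw [abs_mul, abs_of_pos (inv_pos.2 hμR)]
    _ ≤ (μ.real R)⁻¹ * (a * μ.real R + b * μ.real (R \ S)) := by
        rw [hsplit]
        gcongr
        calc _ ≤ a * μ.real (R ∩ S) + b * μ.real (R \ S) :=
              (abs_add_le _ _).trans (add_le_add hin hout)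
          _ ≤ a * μ.real R + b * μ.real (R \ S) := by gcongr
    _ = a + b * (μ.real (R \ S) / μ.real R) := by field_simp

end MeasureTheory

theorem essential_range_approx_general {E : Type*} [MeasurableSpace E]
    (P : Measure E) [IsProbabilityMeasure P]
    (h : E → E → ℝ) (hmeas : Measurable (Function.uncurry h))
    (C : ℝ) (hbdd : ∀ a b, |h a b| ≤ C)
    (v : ℝ) (hv : ∀ δ > (0 : ℝ), 0 < (P.prod P) {p : E × E | |h p.1 p.2 - v| < δ})
    (ε : ℝ) (hε : 0 < ε) :
    ∃ E₁ E₂ : Set E, MeasurableSet E₁ ∧ MeasurableSet E₂ ∧ 0 < P E₁ ∧ 0 < P E₂ ∧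
      |v - (1 / ((P E₁).toReal * (P E₂).toReal)) *
          ∫ p in E₁ ×ˢ E₂, h p.1 p.2 ∂(P.prod P)| ≤ ε := by
  set M := |C| + |v| + 1
  have hM : 0 < M := by positivity
  have hη : 0 < ε / (2 * M) := by positivity
  set S : Set (E × E) := {p | |h p.1 p.2 - v| < ε / 2}
  have hS : MeasurableSet S := measurableSet_lt (hmeas.sub measurable_const).abs measurable_const
  have hμS : 0 < (P.prod P).real S :=
    ENNReal.toReal_pos (hv _ (half_pos hε)).ne' (measure_ne_top _ _)
  obtain ⟨_, ⟨E₁, hE₁, E₂, hE₂, rfl⟩, hR⟩ :=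
    isSetSemiring_measurableRectangles.exists_measureReal_sdiff_lt_mul
      ⟨{univ ×ˢ univ}, countable_singleton _,
        singleton_subset_iff.2 (mem_image2_of_mem .univ .univ), by simp⟩
      generateFrom_prod.symm hS hμS hη
  have hRpos : 0 < (P.prod P).real (E₁ ×ˢ E₂) :=
    pos_of_mul_pos_right (measureReal_nonneg.trans_lt hR) hη.le
  obtain ⟨hP₁, hP₂⟩ : 0 < P E₁ ∧ 0 < P E₂ := by
    rw [← ENNReal.mul_pos_iff, ← Measure.prod_prod]
    exact (ENNReal.toReal_pos_iff.1 hRpos).1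
  refine ⟨E₁, E₂, hE₁, hE₂, hP₁, hP₂, ?_⟩
  have hh : ∀ p : E × E, |h p.1 p.2 - v| ≤ M := fun p =>
    (abs_sub _ _).trans (by linarith [hbdd p.1 p.2, le_abs_self C])
  have hint : Integrable (fun p : E × E => h p.1 p.2) (P.prod P) :=
    .of_bound hmeas.aestronglyMeasurable |C|
      (.of_forall fun p => (hbdd p.1 p.2).trans (le_abs_self C))
  rw [← measureReal_def, ← measureReal_def, ← measureReal_prod_prod, one_div, ← smul_eq_mul,
    ← setAverage_eq, abs_sub_comm]
  calc _ ≤ ε / 2 + M * ((P.prod P).real (E₁ ×ˢ E₂ \ S) / (P.prod P).real (E₁ ×ˢ E₂)) :=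
        abs_setAverage_sub_le hS hint.integrableOn hRpos (half_pos hε).le
          (fun p hp => hp.2.le) (fun p _ => hh p)
    _ ≤ ε / 2 + M * (ε / (2 * M)) := by
        gcongr ε / 2 + M * ?_
        exact ((div_lt_iff₀ hRpos).2 hR).le
    _ = ε := by field_simp; ring

/-- Approximation of essential values by pairings against normalized indicators: on a
probability space with countably generated σ-algebra, for a bounded measurable kernel `h`,
every value `v` in the essential range of `h` (w.r.t. `P ⊗ P`) can be approximated within any
`ε > 0` by the average of `h` over a product set `E₁ × E₂` of positive measure. -/
theorem essential_range_approx {E : Type*} [MeasurableSpace E]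
    [MeasurableSpace.CountablyGenerated E]
    (P : Measure E) [IsProbabilityMeasure P]
    (h : E → E → ℝ) (hmeas : Measurable (Function.uncurry h))
    (C : ℝ) (hbdd : ∀ a b, |h a b| ≤ C)
    (v : ℝ) (hv : ∀ δ > (0 : ℝ), 0 < (P.prod P) {p : E × E | |h p.1 p.2 - v| < δ})
    (ε : ℝ) (hε : 0 < ε) :
    ∃ E₁ E₂ : Set E, MeasurableSet E₁ ∧ MeasurableSet E₂ ∧ 0 < P E₁ ∧ 0 < P E₂ ∧
      |v - (1 / ((P E₁).toReal * (P E₂).toReal)) *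
          ∫ p in E₁ ×ˢ E₂, h p.1 p.2 ∂(P.prod P)| ≤ ε :=
  essential_range_approx_general P h hmeas C hbdd v hv ε hε
end

section
/- Let A be a bounded self-adjoint operator and T a bounded operator on a complex Hilbert space, and let λ > 0. If the Ornstein–Zernike identity T = A + λ·(T ∘ A) holds, then the operator 1 − λA has a bounded inverse, T = A ∘ (1 − λA)⁻¹, and T commutes with A. -/
theorem IsSelfAdjoint.mul_eq_one_of_mul_eq_one {M : Type*} [Monoid M] [StarMul M] {s l : M}
    (hs : IsSelfAdjoint s) (h : l * s = 1) : s * l = 1 := by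
  have h' : s * star l = 1 := by simpa [star_mul, hs.star_eq] using congrArg star h
  rwa [left_inv_eq_right_inv h h']

theorem mul_one_sub_smul_eq_of_eq_add_smul_mul {R A : Type*} [CommRing R] [Ring A] [Algebra R A]
    {a t : A} {c : R} (h : t = a + c • (t * a)) : t * (1 - c • a) = a := by
  rw [mul_sub, mul_one, mul_smul_comm]
  exact sub_eq_of_eq_add h

theorem oze_solution_general {E : Type*} [NormedAddCommGroup E] [InnerProductSpace ℂ E]
    [CompleteSpace E]
    (A T : E →L[ℂ] E) (hA : IsSelfAdjoint A) (lam : ℝ)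
    (hOZE : T = A + (lam : ℂ) • (T ∘L A)) :
    ∃ B : E →L[ℂ] E,
      B ∘L (1 - (lam : ℂ) • A) = 1 ∧ (1 - (lam : ℂ) • A) ∘L B = 1 ∧
      T = A ∘L B ∧ T ∘L A = A ∘L T := by
  set S := 1 - (lam : ℂ) • A
  have hS : IsSelfAdjoint S := .sub (.one _) (.smul (Complex.conj_ofReal lam) hA)
  have hTS : T * S = A := mul_one_sub_smul_eq_of_eq_add_smul_mul hOZE
  -- `B = 1 + λT` is an explicit left inverse of `S`; self-adjointness of `S` makes it two-sided,
  -- so no lower bound or dense-range argument is needed.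
  have hleft : (1 + (lam : ℂ) • T) * S = 1 := by
    rw [add_mul, one_mul, smul_mul_assoc, hTS, sub_add_cancel]
  let u : (E →L[ℂ] E)ˣ := ⟨S, _, hS.mul_eq_one_of_mul_eq_one hleft, hleft⟩
  have hT : T = A * ↑u⁻¹ := by rw [← hTS, mul_assoc, u.mul_inv, mul_one]
  have hAu : Commute A ↑u⁻¹ :=
    ((Commute.one_right A).sub_right ((Commute.refl A).smul_right _)).units_inv_right
  refine ⟨↑u⁻¹, u.inv_mul, u.mul_inv, hT, ?_⟩
  change T * A = A * T
  rw [hT, mul_assoc, ← hAu.eq]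

/-- Solving the Ornstein–Zernike equation: if `A` is bounded self-adjoint, `T` is bounded,
`λ > 0` and `T = A + λ·(T ∘ A)`, then `1 - λA` has a bounded inverse `B`, `T = A ∘ B`, and
`T` commutes with `A`. -/
theorem oze_solution {E : Type*} [NormedAddCommGroup E] [InnerProductSpace ℂ E]
    [CompleteSpace E]
    (A T : E →L[ℂ] E) (hA : IsSelfAdjoint A) (lam : ℝ) (hlam : 0 < lam)
    (hOZE : T = A + (lam : ℂ) • (T ∘L A)) :
    ∃ B : E →L[ℂ] E,
      B ∘L (1 - (lam : ℂ) • A) = 1 ∧ (1 - (lam : ℂ) • A) ∘L B = 1 ∧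
      T = A ∘L B ∧ T ∘L A = A ∘L T :=
  oze_solution_general A T hA lam hOZE
end
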